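/- arXiv:2506.03475 — 2 statements merged into one kernel-verified Lean document; each statement's English description precedes it below -/
import Mathlib

section
/- Define φ(τ) := τ + 36πi·g₃(τ)/(g₂(τ)² − 18η₁(τ)g₃(τ)). Then as Im τ → +∞ with Re τ bounded, φ(τ) = τ + (i/(168π))q^{−1} − 95i/(28π) + O(|q|), where q = e^{2πiτ}. -/
open Complex Filter Asymptotics Set

noncomputable section

/-- q = e^{2πiτ} -/
def qq (τ : ℂ) : ℂ := Complex.exp (2 * (Real.pi : ℂ) * Complex.I * τ)

/-- divisor power sum σ_k(n) as a complex number -/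
def sigmaC (k n : ℕ) : ℂ := ∑ d ∈ n.divisors, (d : ℂ) ^ k

/-- normalized Eisenstein series E₂ -/
def E2 (τ : ℂ) : ℂ := 1 - 24 * ∑' n : ℕ, sigmaC 1 (n + 1) * qq τ ^ (n + 1)

/-- normalized Eisenstein series E₄ -/
def E4 (τ : ℂ) : ℂ := 1 + 240 * ∑' n : ℕ, sigmaC 3 (n + 1) * qq τ ^ (n + 1)

/-- normalized Eisenstein series E₆ -/
def E6 (τ : ℂ) : ℂ := 1 - 504 * ∑' n : ℕ, sigmaC 5 (n + 1) * qq τ ^ (n + 1)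

/-- elliptic invariant g₂ -/
def g2 (τ : ℂ) : ℂ := (4 * (Real.pi : ℂ) ^ 4 / 3) * E4 τ

/-- elliptic invariant g₃ -/
def g3 (τ : ℂ) : ℂ := (8 * (Real.pi : ℂ) ^ 6 / 27) * E6 τ

/-- quasi-period η₁ -/
def eta1 (τ : ℂ) : ℂ := ((Real.pi : ℂ) ^ 2 / 3) * E2 τ

/-- quasi-period η₂ (Legendre relation) -/
def eta2 (τ : ℂ) : ℂ := τ * eta1 τ - 2 * (Real.pi : ℂ) * Complex.I

/-- the function h = g₂² − 18η₁g₃ -/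
def hh (τ : ℂ) : ℂ := g2 τ ^ 2 - 18 * eta1 τ * g3 τ

/-- the family f_C -/
def f (C τ : ℂ) : ℂ := (C - τ) * g2 τ ^ 2 - 18 * (C * eta1 τ - eta2 τ) * g3 τ

end

/-! With `q = e^{2πiτ}`, the functions `g₃` and `h = g₂² − 18η₁g₃` are power series in `q`,
built from the Lambert series `∑ σ_k(n) qⁿ`; since `σ_k(n) ≤ n^{k+1}` these have positive radius
of convergence, so their Taylor expansions at `q = 0` hold with `O(q³)` remainders. This gives
`h = 1792π⁸ q (1 + 66q) + O(q³)` and `g₃ = (8π⁶/27)(1 − 504q) + O(q²)`. Hence `h` has a simple zero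
at `q = 0`, and clearing the denominator `q h ≍ q²` shows that `36πi g₃/h` differs from
`(i/(168π)) q⁻¹ − 95i/(28π)` by `O(q)`. Finally `q → 0` as `Im τ → ∞`. -/

open scoped Topology
open Real

lemma norm_sigmaC_le (k n : ℕ) : ‖sigmaC k n‖ ≤ (n : ℝ) ^ (k + 1) := by
  calc ‖sigmaC k n‖ ≤ ∑ d ∈ n.divisors, ‖(d : ℂ) ^ k‖ := norm_sum_le _ _
    _ ≤ ∑ _d ∈ n.divisors, (n : ℝ) ^ k := by
      gcongr with d hd
      rw [norm_pow, Complex.norm_natCast]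
      gcongr
      exact_mod_cast Nat.divisor_le hd
    _ ≤ (n : ℝ) ^ (k + 1) := by
      rw [Finset.sum_const, nsmul_eq_mul, pow_succ']
      gcongr
      exact_mod_cast Nat.card_divisors_le_self n

lemma sigmaC_two (k : ℕ) : sigmaC k 2 = 1 + 2 ^ k := by
  simp [sigmaC, show (2 : ℕ).divisors = {1, 2} by decide]

noncomputable def lambert (k : ℕ) (q : ℂ) : ℂ := ∑' n : ℕ, sigmaC k (n + 1) * q ^ (n + 1)

section
open FormalMultilinearSeries

lemma half_le_radius_ofScalars_sigmaC (k : ℕ) :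
    ((1 / 2 : NNReal) : ENNReal) ≤ (ofScalars ℂ (sigmaC k)).radius := by
  refine le_radius_of_summable _ <| Summable.of_nonneg_of_le (fun n => by positivity) (fun n => ?_)
    (summable_pow_mul_geometric_of_norm_lt_one (R := ℝ) (k + 1) (r := 1 / 2) (by norm_num))
  rw [ofScalars_norm]
  push_cast
  gcongr
  exact norm_sigmaC_le k n

lemma hasFPowerSeriesAt_lambert (k : ℕ) :
    HasFPowerSeriesAt (lambert k) (ofScalars ℂ (sigmaC k)) 0 := by
  have hr : 0 < (ofScalars ℂ (sigmaC k)).radius :=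
    lt_of_lt_of_le (by norm_num) (half_le_radius_ofScalars_sigmaC k)
  convert ((ofScalars ℂ (sigmaC k)).hasFPowerSeriesOnBall hr).hasFPowerSeriesAt
  funext q
  simp only [FormalMultilinearSeries.sum, ofScalars_apply_eq, smul_eq_mul, lambert]
  exact (Nat.succ_injective).tsum_eq (f := fun n => sigmaC k n * q ^ n) (by
    rintro (_ | n) h
    · simp [sigmaC] at h
    · exact ⟨n, rfl⟩)

lemma lambert_sub_isBigO (k : ℕ) :
    (fun q => lambert k q - (q + sigmaC k 2 * q ^ 2)) =O[𝓝 0] (· ^ 3) := by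
  have := (hasFPowerSeriesAt_lambert k).isBigO_sub_partialSum_pow 3
  simp only [partialSum, Finset.sum_range_succ, Finset.sum_range_zero, ofScalars_apply_eq] at this
  have h3 : (fun y : ℂ => ‖y‖ ^ 3) =O[𝓝 0] (· ^ 3) :=
    (isBigO_refl (fun y : ℂ => y ^ 3) (𝓝 0)).norm_left.congr_left fun y => norm_pow y 3
  exact (this.trans h3).congr_left fun q => by simp [sigmaC]

end

lemma tendsto_lambert (k : ℕ) : Tendsto (lambert k) (𝓝 0) (𝓝 0) := by
  simpa [lambert] using (hasFPowerSeriesAt_lambert k).continuousAt.tendsto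

lemma isBigO_mul_sub_mul {α 𝕜 : Type*} [NormedField 𝕜] {l : Filter α} {f₁ f₂ g₁ g₂ r : α → 𝕜}
    (h₁ : (fun x => f₁ x - g₁ x) =O[l] r) (h₂ : (fun x => f₂ x - g₂ x) =O[l] r)
    (hf₁ : f₁ =O[l] (fun _ => (1 : 𝕜))) (hg₂ : g₂ =O[l] (fun _ => (1 : 𝕜))) :
    (fun x => f₁ x * f₂ x - g₁ x * g₂ x) =O[l] r :=
  ((hf₁.mul h₂).congr_right (fun x => one_mul (r x)) |>.add
    ((h₁.mul hg₂).congr_right fun x => mul_one (r x))).congr_left fun x => by ring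

lemma eisenstein_sq_sub_mul_isBigO :
    (fun q => (1 + 240 * lambert 3 q) ^ 2 - (1 - 24 * lambert 1 q) * (1 - 504 * lambert 5 q)
      - 1008 * (q + 66 * q ^ 2)) =O[𝓝 0] (· ^ 3) := by
  have approx (k : ℕ) (c : ℂ) :
      (fun q => (1 + c * lambert k q) - (1 + c * (q + (1 + 2 ^ k) * q ^ 2))) =O[𝓝 0] (· ^ 3) :=
    ((lambert_sub_isBigO k).const_mul_left c).congr_left fun q => by rw [sigmaC_two]; ring
  have bdd (k : ℕ) (c : ℂ) : (fun q => 1 + c * lambert k q) =O[𝓝 0] (fun _ => (1 : ℂ)) :=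
    (((tendsto_lambert k).const_mul c).const_add 1).isBigO_one ℂ
  have bdd_poly (k : ℕ) (c : ℂ) :
      (fun q => 1 + c * (q + (1 + 2 ^ k) * q ^ 2)) =O[𝓝 0] (fun _ => (1 : ℂ)) :=
    ((by fun_prop : Continuous fun q : ℂ => 1 + c * (q + (1 + 2 ^ k) * q ^ 2)).tendsto 0
      ).isBigO_one ℂ
  have h4 := isBigO_mul_sub_mul (approx 3 240) (approx 3 240) (bdd 3 240) (bdd_poly 3 240)
  have h26 :=
    isBigO_mul_sub_mul (approx 1 (-24)) (approx 5 (-504)) (bdd 1 (-24)) (bdd_poly 5 (-504))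
  have hrest : (fun q : ℂ => q ^ 3 * (601344 + 3468096 * q)) =O[𝓝 0] (· ^ 3) :=
    (isBigO_refl _ _).mul
      (((by fun_prop : Continuous fun q : ℂ => 601344 + 3468096 * q).tendsto 0).isBigO_one ℂ)
      |>.congr_right fun q => mul_one _
  exact ((h4.sub h26).add hrest).congr_left fun q => by ring

-- `g3 τ = g3Q (qq τ)` and `g2 τ ^ 2 - 18 * eta1 τ * g3 τ = hhQ (qq τ)` hold by `rfl`.
noncomputable def g3Q (q : ℂ) : ℂ := 8 * (π : ℂ) ^ 6 / 27 * (1 - 504 * lambert 5 q)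

noncomputable def hhQ (q : ℂ) : ℂ :=
  (4 * (π : ℂ) ^ 4 / 3 * (1 + 240 * lambert 3 q)) ^ 2
    - 18 * ((π : ℂ) ^ 2 / 3 * (1 - 24 * lambert 1 q)) * g3Q q

lemma g3Q_sub_isBigO :
    (fun q => g3Q q - 8 * (π : ℂ) ^ 6 / 27 * (1 - 504 * q)) =O[𝓝 0] (· ^ 2) := by
  have hcube : (fun q : ℂ => q ^ 3) =O[𝓝 0] (· ^ 2) := (isLittleO_pow_pow (by norm_num)).isBigO
  have hsq : (fun q : ℂ => sigmaC 5 2 * q ^ 2) =O[𝓝 0] (· ^ 2) := (isBigO_refl _ _).const_mul_left _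
  exact (((lambert_sub_isBigO 5).trans hcube).add hsq).const_mul_left
    (-(8 * (π : ℂ) ^ 6 / 27 * 504)) |>.congr_left fun q => by simp only [g3Q]; ring

lemma hhQ_sub_isBigO :
    (fun q => hhQ q - 1792 * (π : ℂ) ^ 8 * (q + 66 * q ^ 2)) =O[𝓝 0] (· ^ 3) :=
  (eisenstein_sq_sub_mul_isBigO.const_mul_left (16 * (π : ℂ) ^ 8 / 9)).congr_left fun q => by
    simp only [hhQ, g3Q]; ring

lemma hhQ_isEquivalent : hhQ ~[𝓝 0] fun q => 1792 * (π : ℂ) ^ 8 * q := by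
  have hπ : 1792 * (π : ℂ) ^ 8 ≠ 0 := by simp [pi_ne_zero]
  have hcube : (fun q : ℂ => q ^ 3) =O[𝓝 0] (· ^ 2) := (isLittleO_pow_pow (by norm_num)).isBigO
  have hsq : (fun q : ℂ => 1792 * (π : ℂ) ^ 8 * 66 * q ^ 2) =O[𝓝 0] (· ^ 2) :=
    (isBigO_refl _ _).const_mul_left _
  have hlin : (fun q : ℂ => q ^ 2) =o[𝓝 0] fun q => q := by
    simpa using isLittleO_pow_pow (𝕜 := ℂ) (m := 1) (n := 2) (by norm_num)
  exact ((hhQ_sub_isBigO.trans hcube).add hsq).trans_isLittleO hlin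
    |>.const_mul_right' (c := 1792 * (π : ℂ) ^ 8) (isUnit_iff_ne_zero.mpr hπ)
    |>.congr_left fun q => by rw [Pi.sub_apply]; ring

lemma numerator_isBigO :
    (fun q => 36 * π * I * g3Q q * q - (I / (168 * π) - 95 * I / (28 * π) * q) * hhQ q)
      =O[𝓝 0] (· ^ 3) := by
  have hq : (fun q : ℂ => 36 * π * I * q) =O[𝓝 0] id := (isBigO_refl _ _).const_mul_left _
  have hlin : (fun q : ℂ => I / (168 * π) - 95 * I / (28 * π) * q) =O[𝓝 0] (fun _ => (1 : ℂ)) :=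
    ((by fun_prop : Continuous fun q : ℂ => I / (168 * π) - 95 * I / (28 * π) * q).tendsto 0
      ).isBigO_one ℂ
  have hcube : (fun q : ℂ => 401280 * π ^ 7 * I * q ^ 3) =O[𝓝 0] (· ^ 3) :=
    (isBigO_refl _ _).const_mul_left _
  have hg3 : (fun q => 36 * π * I * q * (g3Q q - 8 * (π : ℂ) ^ 6 / 27 * (1 - 504 * q)))
      =O[𝓝 0] (· ^ 3) :=
    (hq.mul g3Q_sub_isBigO).congr_right fun q => by rw [id]; ring
  have hhQ_term := (hlin.mul hhQ_sub_isBigO).congr_right fun q => one_mul (q ^ 3)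
  have hπ : (π : ℂ) ≠ 0 := ofReal_ne_zero.mpr pi_ne_zero
  -- the two Laurent coefficients are exactly those that cancel the `q` and `q²` terms
  exact ((hg3.sub hhQ_term).add hcube).congr_left fun q => by field_simp; ring

lemma laurent_isBigO :
    (fun q => 36 * π * I * g3Q q / hhQ q - (I / (168 * π) * q⁻¹ - 95 * I / (28 * π)))
      =O[𝓝[≠] 0] id := by
  have hden : (fun q => q * hhQ q) =Θ[𝓝 0] fun q => q * q := by
    have hπ : 1792 * (π : ℂ) ^ 8 ≠ 0 := by simp [pi_ne_zero]
    exact (isTheta_refl _ _).mul ((isTheta_const_mul_right hπ).mp hhQ_isEquivalent.isTheta)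
  have hq : ∀ᶠ q : ℂ in 𝓝[≠] 0, q ≠ 0 := self_mem_nhdsWithin
  have hhQ_ne : ∀ᶠ q : ℂ in 𝓝[≠] 0, hhQ q ≠ 0 := by
    filter_upwards [hq, nhdsWithin_le_nhds hden.eq_zero_iff] with q hq h
    simpa [hq] using h
  refine ((numerator_isBigO.mono nhdsWithin_le_nhds).mul
    (hden.inv.isBigO.mono nhdsWithin_le_nhds)).congr' ?_ ?_
  · filter_upwards [hq, hhQ_ne] with q hq hhQ_ne
    field_simp
  · filter_upwards [hq] with q hq
    simp [field]

lemma tendsto_qq_nhdsNE : Tendsto qq (comap im atTop) (𝓝[≠] 0) :=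
  (Function.Periodic.qParam_tendsto one_pos).congr fun τ => by simp [Function.Periodic.qParam, qq]

theorem phi_asymptotics (A : ℝ) :
    (fun τ : ℂ =>
        (τ + 36 * (Real.pi : ℂ) * Complex.I * g3 τ / (g2 τ ^ 2 - 18 * eta1 τ * g3 τ)) -
          (τ + (Complex.I / (168 * (Real.pi : ℂ))) * (qq τ)⁻¹ - 95 * Complex.I / (28 * (Real.pi : ℂ))))
      =O[Filter.comap Complex.im Filter.atTop ⊓ Filter.principal {τ : ℂ | |τ.re| ≤ A}]
      (fun τ => qq τ) := by
  have g3_eq (τ : ℂ) : g3 τ = g3Q (qq τ) := rfl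
  have hh_eq (τ : ℂ) : g2 τ ^ 2 - 18 * eta1 τ * g3 τ = hhQ (qq τ) := rfl
  refine (laurent_isBigO.comp_tendsto tendsto_qq_nhdsNE).mono inf_le_left |>.congr_left fun τ => ?_
  simp only [Function.comp_apply]
  rw [hh_eq, g3_eq]
  ring
end

section
/- For b ≥ 1/2, the function b ↦ η₁(1/2 + ib) is real-valued and strictly decreasing; equivalently, (d/db)η₁(1/2+ib) = (−1/(24π))(12η₁² − g₂)(1/2+ib) < 0. -/
open Complex Filter Asymptotics Set

/-!
On the line `τ = 1/2 + ib` the nome `q = e^{2πiτ} = -e^{-2πb}` is real, hence so is `η₁`.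
Differentiating the `q`-expansion of `E₂` termwise gives `η₁' = -16π³ i ∑ n σ₁(n) qⁿ`, and
Ramanujan's identity `E₂² - E₄ = -288 ∑ n σ₁(n) qⁿ` turns this into `η₁' = (i / 24π) (12 η₁² - g₂)`.

Ramanujan's identity is the generating-function form of Besge's identity
`12 ∑_{i+j=n} σ₁(i) σ₁(j) = 5 σ₃(n) + (1 - 6n) σ₁(n)`. Its left side is the sum of `12 x y` over the
quadruples `(a, x, b, y)` of positive integers with `ax + by = n`. Following Liouville, splitting
the quadruples according to `a ⋚ b` and to `x ⋚ y`, and matching `y < x` with `b < a` by the Euclidean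
step `(a, x, b, y) ↦ (a + b, y, a, x - y)`, reduces such weighted sums to divisor sums along the
diagonals `a = b` and `x = y`.

Finally, for `q = -x` with `0 < x < 1/16` the series `∑ n σ₁(n) qⁿ` is dominated by its first term
`-x`, so `12 η₁² - g₂ > 0` for `b ≥ 1/2`.
-/

open scoped ArithmeticFunction.sigma Real
open Finset.HasAntidiagonal (antidiagonal)

section Besge

variable {M : Type*} [AddCommMonoid M]

lemma Finset.sum_eq_sum_filter_lt_add_sum_filter_eq_add_sum_filter_gt {α β : Type*} [LinearOrder β]
    (s : Finset α) (g h : α → β) (f : α → M) :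
    ∑ p ∈ s, f p = ∑ p ∈ s.filter (fun p => g p < h p), f p +
      ∑ p ∈ s.filter (fun p => g p = h p), f p + ∑ p ∈ s.filter (fun p => h p < g p), f p := by
  rw [add_assoc, ← Finset.sum_filter_add_sum_filter_not s (fun p => g p < h p),
    ← Finset.sum_filter_add_sum_filter_not (s.filter fun p => ¬ g p < h p) (fun p => g p = h p),
    Finset.filter_filter, Finset.filter_filter]
  congr 3 <;> exact Finset.filter_congr fun p _ => by grind

def quadruples (n : ℕ) : Finset (ℕ × ℕ × ℕ × ℕ) :=
  (Finset.Icc 1 n ×ˢ Finset.Icc 1 n ×ˢ Finset.Icc 1 n ×ˢ Finset.Icc 1 n).filter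
    fun p => p.1 * p.2.1 + p.2.2.1 * p.2.2.2 = n

lemma mem_quadruples {n a x b y : ℕ} :
    (a, x, b, y) ∈ quadruples n ↔ 0 < a ∧ 0 < x ∧ 0 < b ∧ 0 < y ∧ a * x + b * y = n := by
  simp only [quadruples, Finset.mem_filter, Finset.mem_product, Finset.mem_Icc]
  constructor
  · rintro ⟨⟨⟨ha, -⟩, ⟨hx, -⟩, ⟨hb, -⟩, hy, -⟩, h⟩
    exact ⟨ha, hx, hb, hy, h⟩
  · rintro ⟨ha, hx, hb, hy, rfl⟩
    refine ⟨⟨⟨ha, ?_⟩, ⟨hx, ?_⟩, ⟨hb, ?_⟩, hy, ?_⟩, rfl⟩ <;> nlinarith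

lemma sum_quadruples_filter_swap (n : ℕ) (P : ℕ × ℕ × ℕ × ℕ → Prop) [DecidablePred P]
    (f : ℕ × ℕ × ℕ × ℕ → M) :
    ∑ p ∈ (quadruples n).filter P, f p =
      ∑ p ∈ (quadruples n).filter (fun p => P (p.2.2.1, p.2.2.2, p.1, p.2.1)),
        f (p.2.2.1, p.2.2.2, p.1, p.2.1) := by
  refine Finset.sum_nbij' (fun p => (p.2.2.1, p.2.2.2, p.1, p.2.1))
    (fun p => (p.2.2.1, p.2.2.2, p.1, p.2.1)) ?_ ?_ (fun _ _ => rfl) (fun _ _ => rfl) ?_ <;>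
    rintro ⟨a, x, b, y⟩ hp <;> simp only [Finset.mem_filter, mem_quadruples] at hp ⊢ <;> grind

/-- The Euclidean step `(a, x, b, y) ↦ (a + b, y, a, x - y)` is a bijection from the
quadruples with `y < x` onto those with `b < a`. -/
lemma sum_quadruples_filter_snd_gt (n : ℕ) (w : ℕ → ℕ → M) :
    ∑ p ∈ (quadruples n).filter (fun p => p.2.2.2 < p.2.1), w p.2.1 p.2.2.2 =
      ∑ p ∈ (quadruples n).filter (fun p => p.2.2.1 < p.1), w (p.2.1 + p.2.2.2) p.2.1 := by
  refine Finset.sum_nbij' (fun p => (p.1 + p.2.2.1, p.2.2.2, p.1, p.2.1 - p.2.2.2))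
    (fun p => (p.2.2.1, p.2.1 + p.2.2.2, p.1 - p.2.2.1, p.2.1)) ?_ ?_ ?_ ?_ ?_ <;>
    rintro ⟨a, x, b, y⟩ hp <;> simp only [Finset.mem_filter, mem_quadruples] at hp ⊢
  · obtain ⟨⟨ha, hx, hb, hy, rfl⟩, hyx⟩ := hp
    obtain ⟨u, rfl⟩ := Nat.exists_eq_add_of_le hyx.le
    refine ⟨⟨by omega, hy, ha, by omega, by rw [Nat.add_sub_cancel_left]; ring⟩, by omega⟩
  · obtain ⟨⟨ha, hx, hb, hy, rfl⟩, hba⟩ := hp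
    obtain ⟨u, rfl⟩ := Nat.exists_eq_add_of_le hba.le
    refine ⟨⟨hb, by omega, by omega, hx, by rw [Nat.add_sub_cancel_left]; ring⟩, by omega⟩
  all_goals
    obtain ⟨-, h⟩ := hp
    grind

lemma sum_quadruples_filter_fst_eq (n : ℕ) (w : ℕ → ℕ → M) :
    ∑ p ∈ (quadruples n).filter (fun p => p.1 = p.2.2.1), w p.2.1 p.2.2.2 =
      ∑ d ∈ n.divisorsAntidiagonal, ∑ x ∈ Finset.Ico 1 d.2, w x (d.2 - x) := by
  rw [Finset.sum_sigma']
  refine Finset.sum_nbij' (fun p => ⟨(p.1, p.2.1 + p.2.2.2), p.2.1⟩)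
    (fun q => (q.1.1, q.2, q.1.1, q.1.2 - q.2)) ?_ ?_ ?_ ?_ ?_
  · rintro ⟨a, x, b, y⟩ hp
    simp only [Finset.mem_filter, mem_quadruples] at hp
    obtain ⟨⟨ha, hx, -, hy, rfl⟩, rfl⟩ := hp
    simp only [Finset.mem_sigma, Nat.mem_divisorsAntidiagonal, Finset.mem_Ico]
    exact ⟨⟨by ring, by positivity⟩, hx, by omega⟩
  · rintro ⟨⟨d, m⟩, x⟩ hq
    simp only [Finset.mem_sigma, Nat.mem_divisorsAntidiagonal, Finset.mem_Ico] at hq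
    obtain ⟨⟨rfl, hn⟩, hx, hxm⟩ := hq
    obtain ⟨u, rfl⟩ := Nat.exists_eq_add_of_le hxm.le
    simp only [Finset.mem_filter, mem_quadruples, Nat.add_sub_cancel_left]
    exact ⟨⟨Nat.pos_of_ne_zero (left_ne_zero_of_mul hn), hx,
      Nat.pos_of_ne_zero (left_ne_zero_of_mul hn), by omega, by ring⟩, trivial⟩
  · rintro ⟨a, x, b, y⟩ hp
    simp only [Finset.mem_filter] at hp
    simp [hp.2]
  · rintro ⟨⟨d, m⟩, x⟩ hq
    simp only [Finset.mem_sigma, Finset.mem_Ico] at hq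
    simp [Nat.add_sub_cancel' hq.2.2.le]
  · rintro ⟨a, x, b, y⟩ -
    simp

lemma sum_quadruples_filter_snd_eq (n : ℕ) (w : ℕ → ℕ → M) :
    ∑ p ∈ (quadruples n).filter (fun p => p.2.1 = p.2.2.2), w p.2.1 p.2.2.2 =
      ∑ d ∈ n.divisorsAntidiagonal, (d.1 - 1) • w d.2 d.2 := by
  simp_rw [← Nat.card_Ico 1, ← Finset.sum_const]
  rw [Finset.sum_sigma']
  refine Finset.sum_nbij' (fun p => ⟨(p.1 + p.2.2.1, p.2.1), p.1⟩)
    (fun q => (q.2, q.1.2, q.1.1 - q.2, q.1.2)) ?_ ?_ ?_ ?_ ?_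
  · rintro ⟨a, x, b, y⟩ hp
    simp only [Finset.mem_filter, mem_quadruples] at hp
    obtain ⟨⟨ha, hx, hb, -, rfl⟩, rfl⟩ := hp
    simp only [Finset.mem_sigma, Nat.mem_divisorsAntidiagonal, Finset.mem_Ico]
    exact ⟨⟨by ring, by positivity⟩, ha, by omega⟩
  · rintro ⟨⟨m, x⟩, a⟩ hq
    simp only [Finset.mem_sigma, Nat.mem_divisorsAntidiagonal, Finset.mem_Ico] at hq
    obtain ⟨⟨rfl, hn⟩, ha, ham⟩ := hq
    obtain ⟨u, rfl⟩ := Nat.exists_eq_add_of_le ham.le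
    simp only [Finset.mem_filter, mem_quadruples, Nat.add_sub_cancel_left]
    exact ⟨⟨ha, Nat.pos_of_ne_zero (right_ne_zero_of_mul hn), by omega,
      Nat.pos_of_ne_zero (right_ne_zero_of_mul hn), by ring⟩, trivial⟩
  · rintro ⟨a, x, b, y⟩ hp
    simp only [Finset.mem_filter] at hp
    simp [hp.2]
  · rintro ⟨⟨m, x⟩, a⟩ hq
    simp only [Finset.mem_sigma, Finset.mem_Ico] at hq
    simp [Nat.add_sub_cancel' hq.2.2.le]
  · rintro ⟨a, x, b, y⟩ hp
    simp only [Finset.mem_filter] at hp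
    simp [hp.2]

theorem sum_quadruples_eq_fst_diag_add (n : ℕ) (w : ℕ → ℕ → M) :
    ∑ p ∈ quadruples n, w p.2.1 p.2.2.2 =
      ∑ d ∈ n.divisorsAntidiagonal, ∑ x ∈ Finset.Ico 1 d.2, w x (d.2 - x) +
        ∑ p ∈ (quadruples n).filter (fun p => p.2.2.1 < p.1),
          (w p.2.1 p.2.2.2 + w p.2.2.2 p.2.1) := by
  rw [Finset.sum_eq_sum_filter_lt_add_sum_filter_eq_add_sum_filter_gt _ (fun p => p.1)
    (fun p => p.2.2.1), sum_quadruples_filter_fst_eq, sum_quadruples_filter_swap n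
    (fun p => p.1 < p.2.2.1), Finset.sum_add_distrib]
  abel

theorem sum_quadruples_eq_snd_diag_add (n : ℕ) (w : ℕ → ℕ → M) :
    ∑ p ∈ quadruples n, w p.2.1 p.2.2.2 =
      ∑ d ∈ n.divisorsAntidiagonal, (d.1 - 1) • w d.2 d.2 +
        ∑ p ∈ (quadruples n).filter (fun p => p.2.2.1 < p.1),
          (w (p.2.1 + p.2.2.2) p.2.1 + w p.2.1 (p.2.1 + p.2.2.2)) := by
  rw [Finset.sum_eq_sum_filter_lt_add_sum_filter_eq_add_sum_filter_gt _ (fun p => p.2.1)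
    (fun p => p.2.2.2), sum_quadruples_filter_snd_eq, sum_quadruples_filter_swap n
    (fun p => p.2.1 < p.2.2.2), ← sum_quadruples_filter_snd_gt n (fun x y => w x y + w y x),
    Finset.sum_add_distrib]
  abel

lemma sigma_one_eq_sum_divisorsAntidiagonal (n : ℕ) :
    σ 1 n = ∑ d ∈ n.divisorsAntidiagonal, d.2 := by
  rw [Nat.sum_divisorsAntidiagonal' (fun _ x => x), ArithmeticFunction.sigma_one_apply]

lemma sum_antidiagonal_sigma_one_mul_sigma_one (n : ℕ) :
    ∑ p ∈ antidiagonal n, σ 1 p.1 * σ 1 p.2 = ∑ p ∈ quadruples n, p.2.1 * p.2.2.2 := by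
  simp_rw [sigma_one_eq_sum_divisorsAntidiagonal, Finset.sum_mul_sum, ← Finset.sum_product']
  rw [Finset.sum_sigma']
  refine Finset.sum_nbij' (fun q => (q.2.1.1, q.2.1.2, q.2.2.1, q.2.2.2))
    (fun p => ⟨(p.1 * p.2.1, p.2.2.1 * p.2.2.2), ((p.1, p.2.1), (p.2.2.1, p.2.2.2))⟩) ?_ ?_ ?_
    (fun _ _ => rfl) (fun _ _ => rfl)
  · rintro ⟨⟨i, j⟩, ⟨a, x⟩, b, y⟩ hq
    simp only [Finset.mem_sigma, Finset.HasAntidiagonal.mem_antidiagonal, Finset.mem_product,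
      Nat.mem_divisorsAntidiagonal] at hq
    obtain ⟨rfl, ⟨rfl, hi⟩, rfl, hj⟩ := hq
    dsimp only
    rw [mem_quadruples]
    simp only [mul_ne_zero_iff] at hi hj
    exact ⟨by omega, by omega, by omega, by omega, rfl⟩
  · rintro ⟨a, x, b, y⟩ hp
    obtain ⟨ha, hx, hb, hy, rfl⟩ := mem_quadruples.1 hp
    simp [Finset.mem_sigma, Nat.mem_divisorsAntidiagonal, ha.ne', hx.ne', hb.ne', hy.ne']
  · rintro ⟨⟨i, j⟩, ⟨a, x⟩, b, y⟩ hq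
    simp only [Finset.mem_sigma, Finset.HasAntidiagonal.mem_antidiagonal, Finset.mem_product,
      Nat.mem_divisorsAntidiagonal] at hq
    obtain ⟨rfl, ⟨rfl, -⟩, rfl, -⟩ := hq
    rfl

lemma sum_range_natCast (m : ℕ) : ∑ x ∈ Finset.range m, (x : ℚ) = m * (m - 1) / 2 := by
  induction m with
  | zero => simp
  | succ m ih => rw [Finset.sum_range_succ, ih]; push_cast; ring

lemma sum_range_natCast_mul_self (m : ℕ) :
    ∑ x ∈ Finset.range m, (x : ℚ) * x = m * (m - 1) * (2 * m - 1) / 6 := by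
  induction m with
  | zero => simp
  | succ m ih => rw [Finset.sum_range_succ, ih]; push_cast; ring

lemma sum_Ico_one_eq_sum_range {f : ℕ → M} (hf : f 0 = 0) (m : ℕ) :
    ∑ x ∈ Finset.Ico 1 m, f x = ∑ x ∈ Finset.range m, f x := by
  rcases m with _ | m
  · simp
  · rw [Finset.range_eq_Ico, Finset.sum_eq_sum_Ico_succ_bot m.succ_pos, hf, zero_add]

lemma sum_Ico_one_natCast_mul_sub (m : ℕ) :
    ∑ x ∈ Finset.Ico 1 m, (x : ℚ) * (m - x : ℕ) = ((m : ℚ) ^ 3 - m) / 6 := by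
  rw [sum_Ico_one_eq_sum_range (by simp)]
  have hsub : ∀ x ∈ Finset.range m, (x : ℚ) * (m - x : ℕ) = m * x - x * x := fun x hx => by
    rw [Nat.cast_sub (Finset.mem_range.1 hx).le]; ring
  rw [Finset.sum_congr rfl hsub, Finset.sum_sub_distrib, ← Finset.mul_sum, sum_range_natCast,
    sum_range_natCast_mul_self]
  ring

lemma sum_Ico_one_natCast_mul_self (m : ℕ) :
    ∑ x ∈ Finset.Ico 1 m, (x : ℚ) * x = (2 * (m : ℚ) ^ 3 - 3 * m ^ 2 + m) / 6 := by
  rw [sum_Ico_one_eq_sum_range (by simp), sum_range_natCast_mul_self]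
  ring

lemma sum_divisorsAntidiagonal_snd_pow (k n : ℕ) :
    ∑ d ∈ n.divisorsAntidiagonal, (d.2 : ℚ) ^ k = σ k n := by
  rw [Nat.sum_divisorsAntidiagonal' (fun _ x => (x : ℚ) ^ k), ArithmeticFunction.sigma_apply]
  push_cast
  rfl

lemma sum_divisorsAntidiagonal_pred_smul_mul_self (n : ℕ) :
    ∑ d ∈ n.divisorsAntidiagonal, (d.1 - 1) • ((d.2 : ℚ) * d.2) = n * σ 1 n - σ 2 n := by
  have h : ∀ d ∈ n.divisorsAntidiagonal, (d.1 - 1) • ((d.2 : ℚ) * d.2) = n * d.2 ^ 1 - d.2 ^ 2 :=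
    fun d hd => by
      rw [nsmul_eq_mul, Nat.cast_sub (Nat.pos_of_mem_divisors
        (Nat.fst_mem_divisors_of_mem_antidiagonal hd)), ← (Nat.mem_divisorsAntidiagonal.1 hd).1]
      push_cast; ring
  rw [Finset.sum_congr rfl h, Finset.sum_sub_distrib, ← Finset.mul_sum,
    sum_divisorsAntidiagonal_snd_pow, sum_divisorsAntidiagonal_snd_pow]

lemma sum_divisorsAntidiagonal_sum_Ico_one_natCast_mul_sub (n : ℕ) :
    ∑ d ∈ n.divisorsAntidiagonal, ∑ x ∈ Finset.Ico 1 d.2, (x : ℚ) * (d.2 - x : ℕ) =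
      (σ 3 n - σ 1 n) / 6 := by
  simp only [sum_Ico_one_natCast_mul_sub, ← Finset.sum_div, Finset.sum_sub_distrib,
    sum_divisorsAntidiagonal_snd_pow]
  rw [← sum_divisorsAntidiagonal_snd_pow 1]
  simp

lemma sum_divisorsAntidiagonal_sum_Ico_one_natCast_mul_self (n : ℕ) :
    ∑ d ∈ n.divisorsAntidiagonal, ∑ x ∈ Finset.Ico 1 d.2, (x : ℚ) * x =
      (2 * σ 3 n - 3 * σ 2 n + σ 1 n) / 6 := by
  simp only [sum_Ico_one_natCast_mul_self, ← Finset.sum_div, Finset.sum_add_distrib,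
    Finset.sum_sub_distrib, ← Finset.mul_sum, sum_divisorsAntidiagonal_snd_pow]
  rw [← sum_divisorsAntidiagonal_snd_pow 1]
  simp

/-- The difference of the two decompositions of `∑ w x y`, whose off-diagonal parts combine
into the symmetrisation of `v` by `hvw`. -/
theorem sum_quadruples_filter_fst_gt_eq_sub {G : Type*} [AddCommGroup G] (n : ℕ)
    {v w : ℕ → ℕ → G} (hvw : ∀ x y, w x y + w y x - (w (x + y) x + w x (x + y)) = v x y + v y x) :
    ∑ p ∈ (quadruples n).filter (fun p => p.2.2.1 < p.1), (v p.2.1 p.2.2.2 + v p.2.2.2 p.2.1) =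
      ∑ d ∈ n.divisorsAntidiagonal, (d.1 - 1) • w d.2 d.2 -
        ∑ d ∈ n.divisorsAntidiagonal, ∑ x ∈ Finset.Ico 1 d.2, w x (d.2 - x) := by
  have h := (sum_quadruples_eq_fst_diag_add n w).symm.trans (sum_quadruples_eq_snd_diag_add n w)
  simp_rw [← hvw, Finset.sum_sub_distrib]
  rw [sub_eq_sub_iff_add_eq_add, add_comm, h, add_comm]

theorem besge_identity (n : ℕ) :
    12 * ∑ p ∈ antidiagonal n, σ 1 p.1 * σ 1 p.2 + 6 * n * σ 1 n = 5 * σ 3 n + σ 1 n := by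
  have hT := sum_quadruples_eq_fst_diag_add n (fun x y => (x * y : ℚ))
  -- `x y / 2 - x²` is the weight whose Euclidean defect is `x y + y x`.
  have hC := sum_quadruples_filter_fst_gt_eq_sub n (v := fun x y => (x * y : ℚ))
    (w := fun x y => (x * y / 2 - x * x : ℚ)) (fun x y => by push_cast; ring)
  beta_reduce at hT hC
  rw [hC, sum_divisorsAntidiagonal_sum_Ico_one_natCast_mul_sub] at hT
  simp only [smul_sub, ← smul_div_assoc, Finset.sum_sub_distrib, ← Finset.sum_div,
    sum_divisorsAntidiagonal_pred_smul_mul_self,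
    sum_divisorsAntidiagonal_sum_Ico_one_natCast_mul_sub,
    sum_divisorsAntidiagonal_sum_Ico_one_natCast_mul_self] at hT
  rw [sum_antidiagonal_sigma_one_mul_sigma_one]
  have : (12 * ∑ p ∈ quadruples n, (p.2.1 * p.2.2.2 : ℚ)) + 6 * n * σ 1 n = 5 * σ 3 n + σ 1 n := by
    rw [hT]; ring
  exact_mod_cast this

end Besge

section PowerSeries

variable {𝕜 : Type*} [NormedField 𝕜]

lemma summable_norm_mul_pow_of_norm_le_pow {a : ℕ → 𝕜} {k : ℕ} (ha : ∀ n, ‖a n‖ ≤ (n : ℝ) ^ k)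
    {w : 𝕜} (hw : ‖w‖ < 1) : Summable fun n => ‖a n * w ^ n‖ := by
  refine .of_nonneg_of_le (fun n => norm_nonneg _) (fun n => ?_)
    (summable_pow_mul_geometric_of_norm_lt_one k (r := ‖w‖) (by simpa using hw))
  rw [norm_mul, norm_pow]
  exact mul_le_mul_of_nonneg_right (ha n) (by positivity)

lemma norm_sigma_le (k n : ℕ) : ‖(σ k n : 𝕜)‖ ≤ (n : ℝ) ^ (k + 1) := by
  calc ‖(σ k n : 𝕜)‖ ≤ σ k n := by simpa using Nat.norm_cast_le (α := 𝕜) (σ k n)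
    _ ≤ (n : ℝ) ^ (k + 1) := by exact_mod_cast ArithmeticFunction.sigma_le_pow_succ k n

lemma norm_nat_mul_sigma_le (k n : ℕ) : ‖(n * σ k n : 𝕜)‖ ≤ (n : ℝ) ^ (k + 2) := by
  calc ‖(n * σ k n : 𝕜)‖ ≤ n * σ k n := by simpa using Nat.norm_cast_le (α := 𝕜) (n * σ k n)
    _ ≤ n * (n : ℝ) ^ (k + 1) := by
      gcongr; exact_mod_cast ArithmeticFunction.sigma_le_pow_succ k n
    _ = (n : ℝ) ^ (k + 2) := by ring

/-- Ramanujan's identity `E₂² - E₄ = 12 q dE₂/dq`, as an identity of power series. -/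
theorem sigma_tsum_ramanujan [CompleteSpace 𝕜] {w : 𝕜} (hw : ‖w‖ < 1) :
    (1 - 24 * ∑' n, (σ 1 n : 𝕜) * w ^ n) ^ 2 - (1 + 240 * ∑' n, (σ 3 n : 𝕜) * w ^ n) =
      -288 * ∑' n, (n * σ 1 n : 𝕜) * w ^ n := by
  have h1 := summable_norm_mul_pow_of_norm_le_pow (norm_sigma_le 1) hw
  have h3 := (summable_norm_mul_pow_of_norm_le_pow (norm_sigma_le 3) hw).of_norm
  have hn := (summable_norm_mul_pow_of_norm_le_pow (norm_nat_mul_sigma_le 1) hw).of_norm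
  have hsq : 576 * (∑' n, (σ 1 n : 𝕜) * w ^ n) ^ 2 =
      ∑' n, (48 * ((σ 1 n : 𝕜) * w ^ n) + 240 * ((σ 3 n : 𝕜) * w ^ n)
        - 288 * ((n * σ 1 n : 𝕜) * w ^ n)) := by
    rw [sq, tsum_mul_tsum_eq_tsum_sum_antidiagonal_of_summable_norm h1 h1, ← tsum_mul_left]
    congr 1 with n
    have hb := congrArg (Nat.cast : ℕ → 𝕜) (besge_identity n)
    have hpow : ∀ p ∈ antidiagonal n, (σ 1 p.1 : 𝕜) * w ^ p.1 * ((σ 1 p.2 : 𝕜) * w ^ p.2)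
        = (σ 1 p.1 * σ 1 p.2 : 𝕜) * w ^ n := by
      intro p hp
      rw [← Finset.HasAntidiagonal.mem_antidiagonal.1 hp, pow_add]; ring
    rw [Finset.sum_congr rfl hpow, ← Finset.sum_mul]
    push_cast at hb
    linear_combination 48 * w ^ n * hb
  rw [(((h1.of_norm.hasSum.mul_left 48).add (h3.hasSum.mul_left 240)).sub
    (hn.hasSum.mul_left 288)).tsum_eq] at hsq
  linear_combination hsq

end PowerSeries

lemma norm_qq (τ : ℂ) : ‖qq τ‖ = Real.exp (-(2 * π * τ.im)) := by
  rw [qq, Complex.norm_exp]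
  congr 1
  simp

lemma norm_qq_lt_one {τ : ℂ} (hτ : 0 < τ.im) : ‖qq τ‖ < 1 := by
  rw [norm_qq, Real.exp_lt_one_iff, neg_lt_zero]
  positivity

lemma hasDerivAt_qq (τ : ℂ) : HasDerivAt qq (2 * π * I * qq τ) τ := by
  have h := ((hasDerivAt_id τ).const_mul (2 * (π : ℂ) * I)).cexp
  simp only [id, mul_one] at h
  exact h.congr_deriv (mul_comm _ _)

lemma hasDerivAt_qq_pow (n : ℕ) (τ : ℂ) :
    HasDerivAt (fun z => qq z ^ n) (2 * π * I * n * qq τ ^ n) τ := by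
  refine ((hasDerivAt_pow n (qq τ)).comp τ (hasDerivAt_qq τ)).congr_deriv ?_
  rcases n with _ | n
  · simp
  · rw [pow_succ]; push_cast; ring

theorem hasDerivAt_tsum_mul_qq_pow {a : ℕ → ℂ} {k : ℕ} (ha : ∀ n, ‖a n‖ ≤ (n : ℝ) ^ k)
    {τ : ℂ} (hτ : 0 < τ.im) :
    HasDerivAt (fun z => ∑' n, a n * qq z ^ n) (2 * π * I * ∑' n, n * a n * qq τ ^ n) τ := by
  set U := {z : ℂ | τ.im / 2 < z.im}
  have hτU : τ ∈ U := by change τ.im / 2 < τ.im; linarith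
  set r := Real.exp (-(π * τ.im))
  have hr : ‖r‖ < 1 := by
    rw [Real.norm_of_nonneg (Real.exp_pos _).le, Real.exp_lt_one_iff, neg_lt_zero]
    positivity
  have hqU : ∀ z ∈ U, ‖qq z‖ ≤ r := fun z hz => by
    rw [norm_qq]
    have : τ.im / 2 < z.im := hz
    exact Real.exp_le_exp.2 (by nlinarith [Real.pi_pos])
  have hbound : ∀ n, ∀ z ∈ U,
      ‖2 * π * I * (n * a n * qq z ^ n)‖ ≤ 2 * π * ((n : ℝ) ^ (k + 1) * r ^ n) := by
    intro n z hz
    simp only [norm_mul, norm_pow, Complex.norm_natCast, Complex.norm_I, Complex.norm_real,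
      Complex.norm_ofNat, Real.norm_of_nonneg Real.pi_pos.le, mul_one, pow_succ']
    gcongr
    · exact ha n
    · exact hqU z hz
  rw [← tsum_mul_left]
  refine hasDerivAt_tsum_of_isPreconnected
    ((summable_pow_mul_geometric_of_norm_lt_one (k + 1) hr).mul_left (2 * π))
    (isOpen_lt continuous_const continuous_im) (convex_halfSpace_im_gt _).isPreconnected
    (fun n z _ => ?_) hbound hτU ?_ hτU
  · simpa [mul_comm, mul_left_comm, mul_assoc] using (hasDerivAt_qq_pow n z).const_mul (a n)
  · refine (summable_norm_mul_pow_of_norm_le_pow ha ((hqU τ hτU).trans_lt ?_)).of_norm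
    rwa [Real.norm_of_nonneg (Real.exp_pos _).le] at hr

lemma sigmaC_eq_sigma (k n : ℕ) : sigmaC k n = σ k n := by
  simp [sigmaC, ArithmeticFunction.sigma_apply]

lemma tsum_sigmaC_mul_pow_succ (k : ℕ) (w : ℂ) :
    ∑' n : ℕ, sigmaC k (n + 1) * w ^ (n + 1) = ∑' n, (σ k n : ℂ) * w ^ n := by
  simp_rw [sigmaC_eq_sigma]
  exact (tsum_pnat_eq_tsum_succ (f := fun n => (σ k n : ℂ) * w ^ n)).symm.trans
    (tsum_pnat_eq_tsum_of_eq_zero (f := fun n => (σ k n : ℂ) * w ^ n) (by simp))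

lemma E2_eq_tsum (τ : ℂ) : E2 τ = 1 - 24 * ∑' n, (σ 1 n : ℂ) * qq τ ^ n := by
  rw [E2, tsum_sigmaC_mul_pow_succ]

lemma E4_eq_tsum (τ : ℂ) : E4 τ = 1 + 240 * ∑' n, (σ 3 n : ℂ) * qq τ ^ n := by
  rw [E4, tsum_sigmaC_mul_pow_succ]

theorem twelve_eta1_sq_sub_g2 {τ : ℂ} (hτ : 0 < τ.im) :
    12 * eta1 τ ^ 2 - g2 τ = -384 * π ^ 4 * ∑' n, (n * σ 1 n : ℂ) * qq τ ^ n := by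
  rw [eta1, g2, E2_eq_tsum, E4_eq_tsum]
  linear_combination (4 * (π : ℂ) ^ 4 / 3) * sigma_tsum_ramanujan (norm_qq_lt_one hτ)

theorem hasDerivAt_eta1 {τ : ℂ} (hτ : 0 < τ.im) :
    HasDerivAt eta1 (I / (24 * π) * (12 * eta1 τ ^ 2 - g2 τ)) τ := by
  have hE2 : HasDerivAt E2 (-24 * (2 * π * I * ∑' n, n * (σ 1 n : ℂ) * qq τ ^ n)) τ := by
    rw [show E2 = fun z => 1 - 24 * ∑' n, (σ 1 n : ℂ) * qq z ^ n from funext E2_eq_tsum]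
    simpa using ((hasDerivAt_tsum_mul_qq_pow (norm_sigma_le 1) hτ).const_mul 24).const_sub 1
  rw [twelve_eta1_sq_sub_g2 hτ]
  refine (hE2.const_mul ((π : ℂ) ^ 2 / 3)).congr_deriv ?_
  have : (π : ℂ) ≠ 0 := ofReal_ne_zero.2 Real.pi_ne_zero
  field_simp
  ring

lemma qq_half_add_I_mul (b : ℝ) : qq (1 / 2 + I * b) = ((-Real.exp (-(2 * π * b)) : ℝ) : ℂ) := by
  have h : 2 * (π : ℂ) * I * (1 / 2 + I * b) = π * I + ((-(2 * π * b) : ℝ) : ℂ) := by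
    push_cast
    linear_combination (2 * (π : ℂ) * b) * I_sq
  rw [qq, h, Complex.exp_add, Complex.exp_pi_mul_I, ← ofReal_exp]
  push_cast
  ring

lemma tsum_natCast_mul_ofReal_pow (a : ℕ → ℕ) (t : ℝ) :
    ∑' n, (a n : ℂ) * (t : ℂ) ^ n = ((∑' n, (a n : ℝ) * t ^ n : ℝ) : ℂ) := by
  rw [ofReal_tsum]
  push_cast
  rfl

lemma eta1_half_add_I_mul (b : ℝ) : eta1 (1 / 2 + I * b) =
    ((π ^ 2 / 3 * (1 - 24 * ∑' n, (σ 1 n : ℝ) * (-Real.exp (-(2 * π * b))) ^ n) : ℝ) : ℂ) := by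
  rw [eta1, E2_eq_tsum, qq_half_add_I_mul, tsum_natCast_mul_ofReal_pow]
  push_cast
  ring

lemma twelve_eta1_sq_sub_g2_half_add_I_mul {b : ℝ} (hb : 0 < b) :
    12 * eta1 (1 / 2 + I * b) ^ 2 - g2 (1 / 2 + I * b) =
      ((-384 * π ^ 4 * ∑' n, (n * σ 1 n : ℝ) * (-Real.exp (-(2 * π * b))) ^ n : ℝ) : ℂ) := by
  rw [twelve_eta1_sq_sub_g2 (by simpa using hb), qq_half_add_I_mul]
  have := tsum_natCast_mul_ofReal_pow (fun n => n * σ 1 n) (-Real.exp (-(2 * π * b)))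
  push_cast at this ⊢
  rw [this]

lemma nat_add_two_mul_sigma_one_le (n : ℕ) : (n + 2) * σ 1 (n + 2) ≤ 8 ^ (n + 1) := by
  have h2 : n + 2 ≤ 2 ^ (n + 1) := Nat.lt_two_pow_self
  calc (n + 2) * σ 1 (n + 2) ≤ (n + 2) * (n + 2) ^ 2 := by
        gcongr; exact ArithmeticFunction.sigma_le_pow_succ 1 (n + 2)
    _ = (n + 2) ^ 3 := by ring
    _ ≤ (2 ^ (n + 1)) ^ 3 := by gcongr
    _ = 8 ^ (n + 1) := by rw [← pow_mul, mul_comm, pow_mul]; norm_num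

/-- The leading term `-x` dominates: the tail is at most `8x²/(1 - 8x)`. -/
theorem tsum_nat_mul_sigma_one_mul_neg_pow_neg {x : ℝ} (hx₀ : 0 < x) (hx : x < 1 / 16) :
    ∑' n, (n * σ 1 n : ℝ) * (-x) ^ n < 0 := by
  set f : ℕ → ℝ := fun n => (n * σ 1 n : ℝ) * (-x) ^ n
  have hf : Summable f := (summable_norm_mul_pow_of_norm_le_pow (norm_nat_mul_sigma_le 1)
    (w := -x) (by rw [norm_neg, Real.norm_of_nonneg hx₀.le]; linarith)).of_norm
  have hgeom : Summable fun n : ℕ => 8 * x ^ 2 * (8 * x) ^ n :=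
    (summable_geometric_of_lt_one (by positivity) (by linarith)).mul_left _
  have hle : ∀ n, f (n + 2) ≤ 8 * x ^ 2 * (8 * x) ^ n := fun n => by
    calc f (n + 2) ≤ |f (n + 2)| := le_abs_self _
      _ = ((n + 2) * σ 1 (n + 2) : ℕ) * x ^ (n + 2) := by
        simp [f, abs_mul, abs_of_pos hx₀, abs_of_nonneg (by positivity : (0 : ℝ) ≤ n + 2)]
      _ ≤ (8 ^ (n + 1) : ℕ) * x ^ (n + 2) := by
        gcongr; exact nat_add_two_mul_sigma_one_le n
      _ = 8 * x ^ 2 * (8 * x) ^ n := by push_cast; ring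
  have htail : ∑' n, f (n + 2) ≤ 8 * x ^ 2 / (1 - 8 * x) := by
    calc ∑' n, f (n + 2) ≤ ∑' n : ℕ, 8 * x ^ 2 * (8 * x) ^ n :=
          ((summable_nat_add_iff 2).2 hf).tsum_le_tsum hle hgeom
      _ = 8 * x ^ 2 / (1 - 8 * x) := by
          rw [tsum_mul_left, tsum_geometric_of_lt_one (by positivity) (by linarith), div_eq_mul_inv]
  have hsplit : ∑' n, f n = -x + ∑' n, f (n + 2) := by
    rw [← hf.sum_add_tsum_nat_add 2]
    simp [f, Finset.sum_range_succ]
  have hfrac : 8 * x ^ 2 / (1 - 8 * x) < x := by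
    rw [div_lt_iff₀ (by linarith)]
    nlinarith
  linarith

lemma exp_neg_two_pi_mul_lt {b : ℝ} (hb : 1 / 2 ≤ b) : Real.exp (-(2 * π * b)) < 1 / 16 := by
  have h3 : (16 : ℝ) < Real.exp 3 := by
    have he := Real.exp_one_gt_d9
    have : Real.exp 3 = Real.exp 1 ^ 3 := by rw [← Real.exp_nat_mul]; norm_num
    rw [this]
    calc (16 : ℝ) < 2.7182818283 ^ 3 := by norm_num
      _ < Real.exp 1 ^ 3 := by gcongr
  calc Real.exp (-(2 * π * b)) ≤ Real.exp (-3) := by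
        apply Real.exp_le_exp.2; nlinarith [Real.pi_gt_three]
    _ < 1 / 16 := by
        rw [Real.exp_neg, one_div]; exact inv_strictAnti₀ (by norm_num) h3

lemma hasDerivAt_re_eta1_half_add_I_mul {b : ℝ} (hb : 0 < b) :
    HasDerivAt (fun b : ℝ => (eta1 (1 / 2 + I * b)).re)
      (-1 / (24 * π) * (12 * eta1 (1 / 2 + I * b) ^ 2 - g2 (1 / 2 + I * b)).re) b := by
  have hline : HasDerivAt (fun z : ℂ => 1 / 2 + I * z) I b := by
    simpa using ((hasDerivAt_id (b : ℂ)).const_mul I).const_add (1 / 2)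
  have h := ((hasDerivAt_eta1 (by simpa using hb)).comp (b : ℂ) hline).real_of_complex
  refine h.congr_deriv ?_
  rw [← re_ofReal_mul]
  congr 1
  generalize 12 * eta1 (1 / 2 + I * b) ^ 2 - g2 (1 / 2 + I * b) = X
  have : (π : ℂ) ≠ 0 := ofReal_ne_zero.2 Real.pi_ne_zero
  push_cast
  field_simp
  linear_combination X * I_sq

lemma re_twelve_eta1_sq_sub_g2_half_add_I_mul_pos {b : ℝ} (hb : 1 / 2 ≤ b) :
    0 < (12 * eta1 (1 / 2 + I * b) ^ 2 - g2 (1 / 2 + I * b)).re := by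
  rw [twelve_eta1_sq_sub_g2_half_add_I_mul (by linarith), ofReal_re]
  have := tsum_nat_mul_sigma_one_mul_neg_pow_neg (Real.exp_pos _) (exp_neg_two_pi_mul_lt hb)
  have := Real.pi_pos
  nlinarith [pow_pos this 4]

theorem eta1_decreasing_on_half_line :
    (∀ b : ℝ, (1 / 2 : ℝ) ≤ b → (eta1 ((1 / 2 : ℂ) + Complex.I * b)).im = 0) ∧
    StrictAntiOn (fun b : ℝ => (eta1 ((1 / 2 : ℂ) + Complex.I * b)).re) (Set.Ici (1 / 2 : ℝ)) ∧
    (∀ b : ℝ, (1 / 2 : ℝ) ≤ b →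
      HasDerivAt (fun b : ℝ => (eta1 ((1 / 2 : ℂ) + Complex.I * b)).re)
        ((-1 / (24 * Real.pi)) *
          (12 * eta1 ((1 / 2 : ℂ) + Complex.I * b) ^ 2 - g2 ((1 / 2 : ℂ) + Complex.I * b)).re) b ∧
      (-1 / (24 * Real.pi)) *
          (12 * eta1 ((1 / 2 : ℂ) + Complex.I * b) ^ 2 - g2 ((1 / 2 : ℂ) + Complex.I * b)).re < 0) := by
  have hderiv : ∀ b : ℝ, 1 / 2 ≤ b → HasDerivAt (fun b : ℝ => (eta1 (1 / 2 + I * b)).re)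
        (-1 / (24 * π) * (12 * eta1 (1 / 2 + I * b) ^ 2 - g2 (1 / 2 + I * b)).re) b ∧
      -1 / (24 * π) * (12 * eta1 (1 / 2 + I * b) ^ 2 - g2 (1 / 2 + I * b)).re < 0 :=
    fun b hb => ⟨hasDerivAt_re_eta1_half_add_I_mul (by linarith),
      mul_neg_of_neg_of_pos (div_neg_of_neg_of_pos (by norm_num) (by positivity))
        (re_twelve_eta1_sq_sub_g2_half_add_I_mul_pos hb)⟩
  refine ⟨fun b _ => by rw [eta1_half_add_I_mul, ofReal_im], ?_, hderiv⟩
  refine strictAntiOn_of_hasDerivWithinAt_neg (convex_Ici _)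
    (fun b hb => (hderiv b hb).1.continuousAt.continuousWithinAt)
    (fun b hb => (hderiv b (interior_subset hb)).1.hasDerivWithinAt)
    (fun b hb => (hderiv b (interior_subset hb)).2)
end
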